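/- arXiv:quant-ph/0209088 — 7 statements merged into one kernel-verified Lean document; each statement's English description precedes it below -/
import Mathlib

section
/- A density matrix ρ on ℂ^n satisfies the local KMS condition with temperature function β (with respect to the diagonal Hamiltonian H) if and only if ρ = e^{-β(H)H} / tr(e^{-β(H)H}). -/
open Matrix
open scoped ComplexOrder

/-- The diagonal `n × n` complex matrix with entries `exp (f l)`. -/
noncomputable def eDiag {n : ℕ} (f : Fin n → ℂ) : Matrix (Fin n) (Fin n) ℂ :=
  Matrix.diagonal fun l => Complex.exp (f l)

/-!
At `t = 0` the local KMS condition says `tr (ρ x (A y A⁻¹)) = tr (ρ y x)` with `A = e^{-β(H)H}`.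
By cyclicity of the trace this means `A⁻¹ ρ x A = x ρ` for every `x`, so `ρ A⁻¹` is central,
hence a scalar `r`, and `tr ρ = 1` forces `r = (tr A)⁻¹`. Conversely every multiple of `A`
satisfies the condition for all `y`, in particular for every `y(t)`.
-/

@[simp]
lemma eDiag_zero {n : ℕ} : eDiag (fun _ : Fin n => 0) = 1 := by
  simp [eDiag]

lemma eDiag_mul {n : ℕ} (f g : Fin n → ℂ) : eDiag f * eDiag g = eDiag (fun l => f l + g l) := by
  simp [eDiag, diagonal_mul_diagonal, ← Complex.exp_add]

lemma eDiag_neg_mul_eDiag {n : ℕ} (f : Fin n → ℂ) : eDiag (fun l => -f l) * eDiag f = 1 := by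
  simp [eDiag_mul]

namespace Matrix

variable {ι R : Type*} [Fintype ι] [DecidableEq ι]

section CommRing

variable [CommRing R] {ρ A A' : Matrix ι ι R}

theorem commute_mul_of_trace_mul_conj (hA : A * A' = 1)
    (h : ∀ x y, trace (ρ * x * (A * y * A')) = trace (ρ * y * x)) (x : Matrix ι ι R) :
    Commute (ρ * A') x := by
  have hconj : ∀ x, A' * ρ * x * A = x * ρ := fun x =>
    ext_iff_trace_mul_right.2 fun y => calc
      trace (A' * ρ * x * A * y) = trace (ρ * x * (A * y * A')) := by
        simp only [mul_assoc]; rw [trace_mul_comm A']; simp only [mul_assoc]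
      _ = trace (ρ * y * x) := h x y
      _ = trace (x * ρ * y) := by rw [trace_mul_comm, mul_assoc]
  have hright : ∀ x, A' * ρ * x = x * (ρ * A') := fun x => calc
    A' * ρ * x = A' * ρ * x * A * A' := by rw [mul_assoc _ A, hA, mul_one]
    _ = x * (ρ * A') := by rw [hconj, mul_assoc]
  have hcomm : A' * ρ = ρ * A' := by simpa using hright 1
  show ρ * A' * x = x * (ρ * A')
  rw [← hcomm, hright, hcomm]

theorem exists_eq_smul_of_trace_mul_conj (hA : A * A' = 1)
    (h : ∀ x y, trace (ρ * x * (A * y * A')) = trace (ρ * y * x)) : ∃ r : R, ρ = r • A := by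
  obtain ⟨r, hr⟩ := mem_range_scalar_of_commute_single fun _ _ _ =>
    (commute_mul_of_trace_mul_conj hA h _).symm
  refine ⟨r, ?_⟩
  calc ρ = ρ * A' * A := by rw [mul_assoc, mul_eq_one_comm.1 hA, mul_one]
    _ = r • A := by rw [← hr, scalar_apply, smul_eq_diagonal_mul]

theorem trace_mul_conj_of_eq_smul (hA : A' * A = 1) {r : R} (hρ : ρ = r • A)
    (x y : Matrix ι ι R) : trace (ρ * x * (A * y * A')) = trace (ρ * y * x) := by
  subst hρ
  simp only [smul_mul, trace_smul]
  congr 1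
  calc trace (A * x * (A * y * A')) = trace (A' * A * x * (A * y)) := by
        simp only [mul_assoc]; rw [trace_mul_comm A']; simp only [mul_assoc]
    _ = trace (A * y * x) := by rw [hA, one_mul, trace_mul_comm]

end CommRing

theorem trace_mul_conj_iff_eq_inv_trace_smul [Field R] {ρ A A' : Matrix ι ι R}
    (hA : A * A' = 1) (htr : trace ρ = 1) :
    (∀ x y, trace (ρ * x * (A * y * A')) = trace (ρ * y * x)) ↔ ρ = (trace A)⁻¹ • A := by
  refine ⟨fun h => ?_, fun h => trace_mul_conj_of_eq_smul (mul_eq_one_comm.1 hA) h⟩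
  obtain ⟨r, rfl⟩ := exists_eq_smul_of_trace_mul_conj hA h
  rw [trace_smul, smul_eq_mul] at htr
  rw [eq_inv_of_mul_eq_one_left htr]

end Matrix

theorem local_KMS_iff_generalized_Gibbs_general {n : ℕ} (ε : Fin n → ℝ) (β : ℝ → ℝ)
    (ρ : Matrix (Fin n) (Fin n) ℂ) (htr : ρ.trace = 1) :
    (∀ (x y : Matrix (Fin n) (Fin n) ℂ) (t : ℝ),
        Matrix.trace (ρ * x *
          (eDiag (fun l => -((β (ε l) * ε l : ℝ) : ℂ)) *
            (eDiag (fun l => Complex.I * (t : ℂ) * (ε l : ℂ)) * y *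
              eDiag (fun l => -(Complex.I * (t : ℂ) * (ε l : ℂ)))) *
            eDiag (fun l => ((β (ε l) * ε l : ℝ) : ℂ)))) =
      Matrix.trace (ρ *
          (eDiag (fun l => Complex.I * (t : ℂ) * (ε l : ℂ)) * y *
            eDiag (fun l => -(Complex.I * (t : ℂ) * (ε l : ℂ)))) * x)) ↔
    ρ = (Matrix.trace (eDiag (fun l => -((β (ε l) * ε l : ℝ) : ℂ))))⁻¹ •
      eDiag (fun l => -((β (ε l) * ε l : ℝ) : ℂ)) := by
  rw [← trace_mul_conj_iff_eq_inv_trace_smul (eDiag_neg_mul_eDiag _) htr]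
  refine ⟨fun h x y => ?_, fun h x y t => h x _⟩
  simpa using h x y 0

/-- A density matrix `ρ` on `ℂⁿ` satisfies the local KMS condition with temperature
function `β` (with respect to the diagonal Hamiltonian `H = diag(ε₁,…,εₙ)`)
if and only if `ρ = e^{-β(H)H} / tr(e^{-β(H)H})`. -/
theorem local_KMS_iff_generalized_Gibbs {n : ℕ} (ε : Fin n → ℝ) (β : ℝ → ℝ)
    (ρ : Matrix (Fin n) (Fin n) ℂ) (hρ : ρ.PosSemidef) (htr : ρ.trace = 1) :
    (∀ (x y : Matrix (Fin n) (Fin n) ℂ) (t : ℝ),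
        Matrix.trace (ρ * x *
          (eDiag (fun l => -((β (ε l) * ε l : ℝ) : ℂ)) *
            (eDiag (fun l => Complex.I * (t : ℂ) * (ε l : ℂ)) * y *
              eDiag (fun l => -(Complex.I * (t : ℂ) * (ε l : ℂ)))) *
            eDiag (fun l => ((β (ε l) * ε l : ℝ) : ℂ)))) =
      Matrix.trace (ρ *
          (eDiag (fun l => Complex.I * (t : ℂ) * (ε l : ℂ)) * y *
            eDiag (fun l => -(Complex.I * (t : ℂ) * (ε l : ℂ)))) * x)) ↔
    ρ = (Matrix.trace (eDiag (fun l => -((β (ε l) * ε l : ℝ) : ℂ))))⁻¹ •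
      eDiag (fun l => -((β (ε l) * ε l : ℝ) : ℂ)) :=
  local_KMS_iff_generalized_Gibbs_general ε β ρ htr
end

section
/- For every diagonal matrix ρ = diag(ρ_11,…,ρ_nn) and all n×n matrices X, Y: tr(ρ X L(Y)) − tr(ρ L_B(X) Y) = Σ_{l,m} X_{ll} Y_{mm} ( ρ_{ll}(Γ_{-,ε_l−ε_m} + Γ_{+,ε_m−ε_l}) − ρ_{mm}(Γ_{-,ε_m−ε_l} + Γ_{+,ε_l−ε_m}) ), where X_{ll} and Y_{mm} denote diagonal matrix entries. -/
open Matrix Finset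

/-- `E_ω = |ε_l⟩⟨ε_m|` for the pair `p = (l, m)` with `l < m`:
the matrix whose only nonzero entry is a `1` in position `(l, m)`. -/
noncomputable def Eof {n : ℕ} (p : Fin n × Fin n) : Matrix (Fin n) (Fin n) ℂ :=
  Matrix.single p.1 p.2 1

/-- The forward generator
`L(X) = i[Δ,X] − Σ_ω ( Γ₋(ω)(½{E_ω†E_ω, X} − E_ω† X E_ω) + Γ₊(ω)(½{E_ωE_ω†, X} − E_ω X E_ω†) )`,
the sum ranging over the Bohr frequencies `ω = ε_m − ε_l` with `m > l`. -/
noncomputable def genL {n : ℕ} (ε : Fin n → ℝ) (Γm Γp : ℝ → ℝ)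
    (Δ : Matrix (Fin n) (Fin n) ℂ) (X : Matrix (Fin n) (Fin n) ℂ) :
    Matrix (Fin n) (Fin n) ℂ :=
  Complex.I • (Δ * X - X * Δ) -
    ∑ p ∈ Finset.univ.filter (fun p : Fin n × Fin n => p.1 < p.2),
      (((Γm (ε p.2 - ε p.1) : ℝ) : ℂ) •
          ((1 / 2 : ℂ) • ((Eof p)ᴴ * Eof p * X + X * ((Eof p)ᴴ * Eof p)) -
            (Eof p)ᴴ * X * Eof p) +
        ((Γp (ε p.2 - ε p.1) : ℝ) : ℂ) •
          ((1 / 2 : ℂ) • (Eof p * (Eof p)ᴴ * X + X * (Eof p * (Eof p)ᴴ)) -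
            Eof p * X * (Eof p)ᴴ))

/-- The backward generator `L_B`, which differs from `L` only by the sign of the
Hamiltonian (commutator) part. -/
noncomputable def genLB {n : ℕ} (ε : Fin n → ℝ) (Γm Γp : ℝ → ℝ)
    (Δ : Matrix (Fin n) (Fin n) ℂ) (X : Matrix (Fin n) (Fin n) ℂ) :
    Matrix (Fin n) (Fin n) ℂ :=
  (-Complex.I) • (Δ * X - X * Δ) -
    ∑ p ∈ Finset.univ.filter (fun p : Fin n × Fin n => p.1 < p.2),
      (((Γm (ε p.2 - ε p.1) : ℝ) : ℂ) •
          ((1 / 2 : ℂ) • ((Eof p)ᴴ * Eof p * X + X * ((Eof p)ᴴ * Eof p)) -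
            (Eof p)ᴴ * X * Eof p) +
        ((Γp (ε p.2 - ε p.1) : ℝ) : ℂ) •
          ((1 / 2 : ℂ) • (Eof p * (Eof p)ᴴ * X + X * (Eof p * (Eof p)ᴴ)) -
            Eof p * X * (Eof p)ᴴ))

/-! Since `ρ` is diagonal it commutes with `Δ`, so the Hamiltonian parts of `L` and `L_B`,
which carry opposite signs, cancel under the trace. For a jump operator `A` with `ρ`
commuting with `A†A` the anticommutator halves of the dissipator cancel in the same way,
leaving only the sandwich terms `A† X A`; for a matrix unit `A = |l⟩⟨m|` these read off
diagonal entries. Finally `Γ∓` vanish at non-positive frequencies, which turns the sum over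
pairs `l < m` into the full double sum over `l, m`. -/

theorem trace_mul_mul_mul_of_commute {ι R : Type*} [Fintype ι] [CommSemiring R]
    {ρ P : Matrix ι ι R} (h : Commute ρ P) (X Y : Matrix ι ι R) :
    trace (ρ * X * Y * P) = trace (ρ * P * X * Y) := by
  rw [trace_mul_comm, ← Matrix.mul_assoc, ← Matrix.mul_assoc, h.symm.eq]

theorem trace_mul_mul_smul_commutator {ι R : Type*} [Fintype ι] [CommRing R]
    {ρ Δ : Matrix ι ι R} (h : Commute ρ Δ) (c : R) (X Y : Matrix ι ι R) :
    trace (ρ * X * (c • (Δ * Y - Y * Δ))) = trace (ρ * ((-c) • (Δ * X - X * Δ)) * Y) := by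
  simp only [Matrix.mul_smul, Matrix.smul_mul, trace_smul, Matrix.mul_sub, Matrix.sub_mul,
    trace_sub, ← Matrix.mul_assoc, trace_mul_mul_mul_of_commute h]
  simp only [neg_smul, smul_sub]
  abel

theorem trace_diagonal_mul_conj_single_mul {ι R : Type*} [Fintype ι] [DecidableEq ι]
    [CommSemiring R] [StarRing R] (i j : ι) (r : ι → R) (X Y : Matrix ι ι R) :
    trace (diagonal r * ((single i j 1)ᴴ * X * single i j 1) * Y) = r j * X i i * Y j j := by
  rw [conjTranspose_single, star_one, single_mul_mul_single, Matrix.mul_assoc, trace_mul_comm,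
    Matrix.mul_assoc, trace_single_mul, mul_diagonal]
  simp only [one_mul, mul_one, smul_eq_mul]
  ring

section Dissipator

variable {ι K : Type*} [Fintype ι] [Field K] [StarRing K]

noncomputable def dissipator (A X : Matrix ι ι K) : Matrix ι ι K :=
  (1 / 2 : K) • (Aᴴ * A * X + X * (Aᴴ * A)) - Aᴴ * X * A

theorem trace_mul_dissipator_sub {ρ A : Matrix ι ι K} (h : Commute ρ (Aᴴ * A))
    (X Y : Matrix ι ι K) :
    trace (ρ * X * dissipator A Y) - trace (ρ * dissipator A X * Y) =
      trace (ρ * (Aᴴ * X * A) * Y) - trace (ρ * X * (Aᴴ * Y * A)) := by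
  unfold dissipator
  generalize Aᴴ * A = P at h ⊢
  simp only [Matrix.mul_smul, Matrix.smul_mul, trace_smul, Matrix.mul_sub, Matrix.sub_mul,
    Matrix.mul_add, Matrix.add_mul, trace_sub, trace_add, ← Matrix.mul_assoc,
    trace_mul_mul_mul_of_commute h, smul_eq_mul]
  ring

theorem trace_mul_dissipator_single_sub [DecidableEq ι] (i j : ι) (r : ι → K)
    (X Y : Matrix ι ι K) :
    trace (diagonal r * X * dissipator (single i j 1) Y) -
        trace (diagonal r * dissipator (single i j 1) X * Y) =
      r j * (X i i * Y j j - X j j * Y i i) := by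
  have h : Commute (diagonal r) ((single i j 1)ᴴ * single i j 1) := by
    rw [conjTranspose_single, star_one, single_mul_single_same, one_mul, ← diagonal_single]
    exact commute_diagonal _ _
  rw [trace_mul_dissipator_sub h, trace_diagonal_mul_conj_single_mul, conjTranspose_single,
    star_one, single_mul_mul_single, trace_mul_comm, trace_single_mul, diagonal_mul]
  simp only [one_mul, mul_one, smul_eq_mul]
  ring

end Dissipator

theorem Finset.sum_sum_eq_sum_lt_add_swap {ι M : Type*} [Fintype ι] [LinearOrder ι]
    [AddCommMonoid M] (f : ι → ι → M) (hf : ∀ i, f i i = 0) :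
    ∑ i, ∑ j, f i j =
      ∑ p ∈ univ.filter (fun p : ι × ι => p.1 < p.2), (f p.1 p.2 + f p.2 p.1) := by
  rw [sum_add_distrib, sum_filter, sum_filter, Fintype.sum_prod_type, Fintype.sum_prod_type]
  dsimp only
  rw [sum_comm (f := fun i j => if i < j then f j i else 0), ← sum_add_distrib]
  refine sum_congr rfl fun i _ => ?_
  rw [← sum_add_distrib]
  refine sum_congr rfl fun j _ => ?_
  rcases lt_trichotomy i j with h | rfl | h
  · simp [h, h.not_gt]
  · simp [hf]
  · simp [h, h.not_gt]

noncomputable def genDissipative {n : ℕ} (ε : Fin n → ℝ) (Γm Γp : ℝ → ℝ)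
    (X : Matrix (Fin n) (Fin n) ℂ) : Matrix (Fin n) (Fin n) ℂ :=
  ∑ p ∈ univ.filter (fun p : Fin n × Fin n => p.1 < p.2),
    (((Γm (ε p.2 - ε p.1) : ℝ) : ℂ) • dissipator (Eof p) X +
      ((Γp (ε p.2 - ε p.1) : ℝ) : ℂ) • dissipator (Eof p)ᴴ X)

section Generators

variable {n : ℕ} (ε : Fin n → ℝ) (Γm Γp : ℝ → ℝ) (Δ X : Matrix (Fin n) (Fin n) ℂ)

theorem genL_eq :
    genL ε Γm Γp Δ X = Complex.I • (Δ * X - X * Δ) - genDissipative ε Γm Γp X := by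
  simp only [genL, genDissipative, dissipator, conjTranspose_conjTranspose]

theorem genLB_eq :
    genLB ε Γm Γp Δ X = (-Complex.I) • (Δ * X - X * Δ) - genDissipative ε Γm Γp X := by
  simp only [genLB, genDissipative, dissipator, conjTranspose_conjTranspose]

theorem trace_mul_genDissipative_sub (r : Fin n → ℂ) (Y : Matrix (Fin n) (Fin n) ℂ) :
    trace (diagonal r * X * genDissipative ε Γm Γp Y) -
        trace (diagonal r * genDissipative ε Γm Γp X * Y) =
      ∑ p ∈ univ.filter (fun p : Fin n × Fin n => p.1 < p.2),
        (((Γm (ε p.2 - ε p.1) : ℝ) : ℂ) *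
            (r p.2 * (X p.1 p.1 * Y p.2 p.2 - X p.2 p.2 * Y p.1 p.1)) +
          ((Γp (ε p.2 - ε p.1) : ℝ) : ℂ) *
            (r p.1 * (X p.2 p.2 * Y p.1 p.1 - X p.1 p.1 * Y p.2 p.2))) := by
  simp only [genDissipative, Matrix.mul_sum, Matrix.sum_mul, trace_sum, ← sum_sub_distrib]
  refine sum_congr rfl fun p _ => ?_
  rw [Eof, conjTranspose_single, star_one, ← trace_mul_dissipator_single_sub,
    ← trace_mul_dissipator_single_sub]
  simp only [Matrix.mul_add, Matrix.add_mul, Matrix.mul_smul, Matrix.smul_mul, trace_add,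
    trace_smul, smul_eq_mul]
  ring

end Generators

theorem trace_genL_sub_trace_genLB_general {n : ℕ} (ε : Fin n → ℝ) (hε : StrictMono ε)
    (Γm Γp : ℝ → ℝ)
    (hΓm0 : ∀ ω ≤ (0 : ℝ), Γm ω = 0) (hΓp0 : ∀ ω ≤ (0 : ℝ), Γp ω = 0)
    (d : Fin n → ℝ) (r : Fin n → ℂ) (X Y : Matrix (Fin n) (Fin n) ℂ) :
    Matrix.trace (Matrix.diagonal r * X *
        genL ε Γm Γp (Matrix.diagonal fun l => ((d l : ℝ) : ℂ)) Y) -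
      Matrix.trace (Matrix.diagonal r *
        genLB ε Γm Γp (Matrix.diagonal fun l => ((d l : ℝ) : ℂ)) X * Y) =
    ∑ l : Fin n, ∑ m : Fin n, X l l * Y m m *
      (r l * (((Γm (ε l - ε m) : ℝ) : ℂ) + ((Γp (ε m - ε l) : ℝ) : ℂ)) -
        r m * (((Γm (ε m - ε l) : ℝ) : ℂ) + ((Γp (ε l - ε m) : ℝ) : ℂ))) := by
  rw [genL_eq, genLB_eq, Matrix.mul_sub, Matrix.mul_sub, Matrix.sub_mul, trace_sub, trace_sub,
    sub_sub_sub_comm,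
    trace_mul_mul_smul_commutator (commute_diagonal r fun l => ((d l : ℝ) : ℂ)), sub_self,
    zero_sub, trace_mul_genDissipative_sub, sum_sum_eq_sum_lt_add_swap _ fun l => by ring,
    ← sum_neg_distrib]
  refine sum_congr rfl fun p hp => ?_
  have hle : ε p.1 - ε p.2 ≤ 0 := sub_nonpos.2 (hε.monotone (mem_filter.1 hp).2.le)
  rw [hΓm0 _ hle, hΓp0 _ hle]
  push_cast
  ring

/-- For every diagonal matrix `ρ = diag(ρ₁₁,…,ρₙₙ)` and all `n × n` matrices `X`, `Y`:
`tr(ρ X L(Y)) − tr(ρ L_B(X) Y)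
  = Σ_{l,m} X_{ll} Y_{mm} ( ρ_{ll}(Γ₋(ε_l−ε_m) + Γ₊(ε_m−ε_l)) − ρ_{mm}(Γ₋(ε_m−ε_l) + Γ₊(ε_l−ε_m)) )`. -/
theorem trace_genL_sub_trace_genLB {n : ℕ} (ε : Fin n → ℝ) (hε : StrictMono ε)
    (Γm Γp : ℝ → ℝ) (hΓm : ∀ ω, 0 ≤ Γm ω) (hΓp : ∀ ω, 0 ≤ Γp ω)
    (hΓm0 : ∀ ω ≤ (0 : ℝ), Γm ω = 0) (hΓp0 : ∀ ω ≤ (0 : ℝ), Γp ω = 0)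
    (d : Fin n → ℝ) (r : Fin n → ℂ) (X Y : Matrix (Fin n) (Fin n) ℂ) :
    Matrix.trace (Matrix.diagonal r * X *
        genL ε Γm Γp (Matrix.diagonal fun l => ((d l : ℝ) : ℂ)) Y) -
      Matrix.trace (Matrix.diagonal r *
        genLB ε Γm Γp (Matrix.diagonal fun l => ((d l : ℝ) : ℂ)) X * Y) =
    ∑ l : Fin n, ∑ m : Fin n, X l l * Y m m *
      (r l * (((Γm (ε l - ε m) : ℝ) : ℂ) + ((Γp (ε m - ε l) : ℝ) : ℂ)) -
        r m * (((Γm (ε m - ε l) : ℝ) : ℂ) + ((Γp (ε l - ε m) : ℝ) : ℂ))) :=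
  trace_genL_sub_trace_genLB_general ε hε Γm Γp hΓm0 hΓp0 d r X Y
end

section
/- Let n ≥ 3, let ε_1 < … < ε_n be real energy levels, let β_1, β_2 > 0 and μ_1, μ_2 ∈ ℝ, and let (ρ_{mm}) be strictly positive with Σ_m ρ_{mm} = 1. If all microscopic currents vanish, i.e. ρ_{nn}/ρ_{mm} = e^{β_j(ε_m − ε_n − μ_j)} for j = 1,2 and all pairs m > n, then β_1 = β_2 =: β, μ_1 = μ_2 = 0, and ρ is the Gibbs state: ρ_{mm} = e^{-β ε_m} / Σ_k e^{-β ε_k} for every m. -/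
open Finset

/-- If all microscopic currents vanish, i.e. `ρ_nn/ρ_mm = e^{β_j(ε_m − ε_n − μ_j)}` for both
reservoirs `j = 1,2` and all pairs `ε_m > ε_n` (with at least three levels), then
`β₁ = β₂ =: β`, `μ₁ = μ₂ = 0`, and `ρ` is the Gibbs state at inverse temperature `β`. -/
theorem gibbs_of_vanishing_microcurrents {n : ℕ} (hn : 3 ≤ n)
    (ε : Fin n → ℝ) (hε : StrictMono ε)
    (β₁ β₂ : ℝ) (hβ₁ : 0 < β₁) (hβ₂ : 0 < β₂) (μ₁ μ₂ : ℝ)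
    (r : Fin n → ℝ) (hr : ∀ m, 0 < r m) (hsum : ∑ m, r m = 1)
    (h : ∀ m l : Fin n, l < m →
      r l / r m = Real.exp (β₁ * (ε m - ε l - μ₁)) ∧
      r l / r m = Real.exp (β₂ * (ε m - ε l - μ₂))) :
    β₁ = β₂ ∧ μ₁ = 0 ∧ μ₂ = 0 ∧
      ∀ m, r m = Real.exp (-β₁ * ε m) / ∑ k, Real.exp (-β₁ * ε k) := by
  have h0 : (0:ℕ) < n := by omega
  have h1 : (1:ℕ) < n := by omega
  have h2 : (2:ℕ) < n := by omega
  set i0 : Fin n := ⟨0, h0⟩ with hi0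
  set i1 : Fin n := ⟨1, h1⟩ with hi1
  set i2 : Fin n := ⟨2, h2⟩ with hi2
  have h01 : i0 < i1 := by simp [hi0, hi1, Fin.lt_def]
  have h02 : i0 < i2 := by simp [hi0, hi2, Fin.lt_def]
  have h12 : i1 < i2 := by simp [hi1, hi2, Fin.lt_def]
  -- exponent equalities
  have key : ∀ m l : Fin n, l < m →
      β₁ * (ε m - ε l - μ₁) = β₂ * (ε m - ε l - μ₂) := by
    intro m l hlm
    obtain ⟨ha, hb⟩ := h m l hlm
    exact Real.exp_eq_exp.mp (ha.symm.trans hb)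
  have e10 := key i1 i0 h01
  have e20 := key i2 i0 h02
  have hgap : ε i1 < ε i2 := hε h12
  have hcancel : β₁ * (ε i2 - ε i1) = β₂ * (ε i2 - ε i1) := by
    linear_combination e20 - e10
  have hββ : β₁ = β₂ := mul_right_cancel₀ (by linarith : ε i2 - ε i1 ≠ 0) hcancel
  -- μ₁ = 0
  have p1 := (h i1 i0 h01).1
  have p2 := (h i2 i1 h12).1
  have p3 := (h i2 i0 h02).1
  have hmul : Real.exp (β₁ * (ε i1 - ε i0 - μ₁)) * Real.exp (β₁ * (ε i2 - ε i1 - μ₁))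
      = Real.exp (β₁ * (ε i2 - ε i0 - μ₁)) := by
    rw [← p1, ← p2, ← p3]
    field_simp [(hr i1).ne', (hr i2).ne']
  rw [← Real.exp_add] at hmul
  have hsum0 := Real.exp_eq_exp.mp hmul
  have hβμ : β₁ * μ₁ = 0 := by linear_combination -hsum0
  have hμ1 : μ₁ = 0 := by
    rcases mul_eq_zero.mp hβμ with hh | hh
    · exact absurd hh hβ₁.ne'
    · exact hh
  -- μ₂ = 0
  have hμ2 : μ₂ = 0 := by
    rw [← hββ] at e10
    have hmm : β₁ * μ₂ = β₁ * μ₁ := by linear_combination e10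
    rw [mul_left_cancel₀ hβ₁.ne' hmm, hμ1]
  -- Gibbs form
  refine ⟨hββ, hμ1, hμ2, ?_⟩
  have hF : ∀ m, r m * Real.exp (β₁ * ε m) = r i0 * Real.exp (β₁ * ε i0) := by
    intro m
    rcases eq_or_ne m i0 with rfl | hm
    · rfl
    · have hmv : m.1 ≠ 0 := fun hh => hm (Fin.ext hh)
      have hlt : i0 < m := by
        rw [Fin.lt_def]
        exact Nat.pos_of_ne_zero hmv
      have hq := (h m i0 hlt).1
      rw [hμ1] at hq
      have hq' : r i0 = Real.exp (β₁ * (ε m - ε i0 - 0)) * r m :=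
        (div_eq_iff (hr m).ne').mp hq
      have hexp : Real.exp (β₁ * (ε m - ε i0 - 0))
          = Real.exp (β₁ * ε m) / Real.exp (β₁ * ε i0) := by
        rw [← Real.exp_sub]; congr 1; ring
      rw [hq', hexp]
      field_simp
  have hS : 0 < ∑ k, Real.exp (-β₁ * ε k) := by
    apply Finset.sum_pos (fun k _ => Real.exp_pos _)
    exact ⟨i0, Finset.mem_univ i0⟩
  have hrm : ∀ m, r m = (r i0 * Real.exp (β₁ * ε i0)) * Real.exp (-β₁ * ε m) := by
    intro m
    rw [← hF m, mul_assoc, ← Real.exp_add]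
    simp
  have hone : (r i0 * Real.exp (β₁ * ε i0)) * ∑ k, Real.exp (-β₁ * ε k) = 1 := by
    rw [Finset.mul_sum]
    rw [← hsum]
    exact Finset.sum_congr rfl fun m _ => (hrm m).symm
  intro m
  rw [hrm m, eq_div_iff hS.ne']
  calc r i0 * Real.exp (β₁ * ε i0) * Real.exp (-β₁ * ε m) * ∑ k, Real.exp (-β₁ * ε k)
      = (r i0 * Real.exp (β₁ * ε i0) * ∑ k, Real.exp (-β₁ * ε k)) * Real.exp (-β₁ * ε m) := by ring
    _ = Real.exp (-β₁ * ε m) := by rw [hone, one_mul]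
end

section
/- Assume symmetric coupling γ_{j,mn} = γ_{mn} > 0 for j = 1,2, equal chemical potentials μ with ε_m − ε_n − μ > 0 for all m > n, and β_1 > β_2 > 0 (reservoir 1 colder). Let (ρ_{mm}) satisfy ρ_{mm} < ρ_{nn} whenever ε_m > ε_n (no inversely populated states), set N_j(ω) := 1/(e^{β_j(ω − μ)} − 1), and define the total energy currents J_j^E := Σ_{m>n} (ε_m − ε_n) · 2γ_{mn}( (N_j(ε_m−ε_n) + 1) ρ_{mm} − N_j(ε_m−ε_n) ρ_{nn} ). If J_1^E + J_2^E = 0 (stationary energy balance), then J_1^E ≥ 0: the energy flows from the hot reservoir to the cold one. -/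
open Finset

/-- With symmetric coupling, equal chemical potentials, reservoir 1 colder (`β₁ > β₂ > 0`)
and no inversely populated states, if the total energy currents into the two reservoirs
balance (`J₁^E + J₂^E = 0`), then `J₁^E ≥ 0`: energy flows from the hot reservoir to the
cold one. -/
theorem energy_flows_hot_to_cold {n : ℕ} (ε : Fin n → ℝ) (hε : StrictMono ε)
    (μ β₁ β₂ : ℝ) (hβ₂ : 0 < β₂) (hβ : β₂ < β₁)
    (γ : Fin n → Fin n → ℝ) (hγ : ∀ p q : Fin n, q < p → 0 < γ p q)
    (hgap : ∀ p q : Fin n, q < p → 0 < ε p - ε q - μ)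
    (r : Fin n → ℝ) (hr : ∀ p q : Fin n, ε q < ε p → r p < r q)
    (J₁ J₂ : ℝ)
    (hJ₁ : J₁ = ∑ p ∈ Finset.univ.filter (fun p : Fin n × Fin n => p.2 < p.1),
      (ε p.1 - ε p.2) * (2 * γ p.1 p.2 *
        ((1 / (Real.exp (β₁ * (ε p.1 - ε p.2 - μ)) - 1) + 1) * r p.1 -
          (1 / (Real.exp (β₁ * (ε p.1 - ε p.2 - μ)) - 1)) * r p.2)))
    (hJ₂ : J₂ = ∑ p ∈ Finset.univ.filter (fun p : Fin n × Fin n => p.2 < p.1),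
      (ε p.1 - ε p.2) * (2 * γ p.1 p.2 *
        ((1 / (Real.exp (β₂ * (ε p.1 - ε p.2 - μ)) - 1) + 1) * r p.1 -
          (1 / (Real.exp (β₂ * (ε p.1 - ε p.2 - μ)) - 1)) * r p.2)))
    (hbal : J₁ + J₂ = 0) :
    0 ≤ J₁ := by
  have key : 0 ≤ J₁ - J₂ := by
    rw [hJ₁, hJ₂, ← Finset.sum_sub_distrib]
    apply Finset.sum_nonneg
    intro p hp
    simp only [Finset.mem_filter] at hp
    obtain ⟨-, hlt⟩ := hp
    have hω0 : 0 < ε p.1 - ε p.2 - μ := hgap _ _ hlt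
    have hεlt : ε p.2 < ε p.1 := hε hlt
    have hrlt : r p.1 < r p.2 := hr _ _ hεlt
    have hγp : 0 < γ p.1 p.2 := hγ _ _ hlt
    have hd2 : 0 < Real.exp (β₂ * (ε p.1 - ε p.2 - μ)) - 1 := by
      have : (1:ℝ) < Real.exp (β₂ * (ε p.1 - ε p.2 - μ)) := by
        rw [← Real.exp_zero]
        exact Real.exp_lt_exp.mpr (by positivity)
      linarith
    have hd12 : Real.exp (β₂ * (ε p.1 - ε p.2 - μ)) - 1
        < Real.exp (β₁ * (ε p.1 - ε p.2 - μ)) - 1 := by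
      have : Real.exp (β₂ * (ε p.1 - ε p.2 - μ))
          < Real.exp (β₁ * (ε p.1 - ε p.2 - μ)) := by
        exact Real.exp_lt_exp.mpr (by nlinarith)
      linarith
    have hN : 1 / (Real.exp (β₁ * (ε p.1 - ε p.2 - μ)) - 1)
        < 1 / (Real.exp (β₂ * (ε p.1 - ε p.2 - μ)) - 1) :=
      one_div_lt_one_div_of_lt hd2 hd12
    set N₁ := 1 / (Real.exp (β₁ * (ε p.1 - ε p.2 - μ)) - 1)
    set N₂ := 1 / (Real.exp (β₂ * (ε p.1 - ε p.2 - μ)) - 1)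
    have hA : 0 < ε p.1 - ε p.2 := by linarith
    nlinarith [mul_pos (mul_pos hA hγp) (mul_pos (sub_pos.mpr hN) (sub_pos.mpr hrlt))]
  linarith
end

section
/- Define X := (Γ_{-,31}Γ_{+,21} + Γ_{-,32}Γ_{+,21} + Γ_{+,31}Γ_{-,32}) / (Γ_{-,31}Γ_{-,21} + Γ_{-,31}Γ_{+,32} + Γ_{-,32}Γ_{-,21}) and Y := (Γ_{+,31}Γ_{-,21} + Γ_{+,32}Γ_{+,21} + Γ_{+,31}Γ_{+,32}) / (Γ_{-,32}Γ_{-,21} + Γ_{-,31}Γ_{-,21} + Γ_{-,31}Γ_{+,32}). Then the vector ρ := (1, X, Y)/(1 + X + Y) has strictly positive entries summing to 1 and satisfies Aρ = 0; i.e. it is a stationary state of the three-level Pauli master equation. -/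
open Matrix Finset

/-- The vector `ρ = (1, X, Y)/(1 + X + Y)`, with `X` and `Y` the indicated ratios of
rate products, has strictly positive entries summing to 1 and lies in the kernel of the
three-level Pauli generator `A`: it is a stationary state of the master equation. -/
theorem three_level_stationary_state
    (Γm21 Γm31 Γm32 Γp21 Γp31 Γp32 : ℝ)
    (h1 : 0 < Γm21) (h2 : 0 < Γm31) (h3 : 0 < Γm32)
    (h4 : 0 < Γp21) (h5 : 0 < Γp31) (h6 : 0 < Γp32)
    (A : Matrix (Fin 3) (Fin 3) ℝ)
    (hA : A = !![Γp21 + Γp31, -Γm21, -Γm31;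
                 -Γp21, Γm21 + Γp32, -Γm32;
                 -Γp31, -Γp32, Γm31 + Γm32])
    (X Y : ℝ)
    (hX : X = (Γm31 * Γp21 + Γm32 * Γp21 + Γp31 * Γm32) /
      (Γm31 * Γm21 + Γm31 * Γp32 + Γm32 * Γm21))
    (hY : Y = (Γp31 * Γm21 + Γp32 * Γp21 + Γp31 * Γp32) /
      (Γm32 * Γm21 + Γm31 * Γm21 + Γm31 * Γp32))
    (ρ : Fin 3 → ℝ)
    (hρ : ρ = ![1 / (1 + X + Y), X / (1 + X + Y), Y / (1 + X + Y)]) :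
    (∀ i, 0 < ρ i) ∧ (∑ i, ρ i) = 1 ∧ A.mulVec ρ = 0 := by
  set D : ℝ := Γm31 * Γm21 + Γm31 * Γp32 + Γm32 * Γm21 with hD
  have hDpos : 0 < D := by positivity
  have hDne : D ≠ 0 := ne_of_gt hDpos
  have hXD : X * D = Γm31 * Γp21 + Γm32 * Γp21 + Γp31 * Γm32 := by
    rw [hX]; field_simp
  have hYD : Y * D = Γp31 * Γm21 + Γp32 * Γp21 + Γp31 * Γp32 := by
    rw [hY]; rw [show Γm32 * Γm21 + Γm31 * Γm21 + Γm31 * Γp32 = D by rw [hD]; ring]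
    field_simp
  have hXpos : 0 < X := by
    rw [hX]; positivity
  have hYpos : 0 < Y := by
    rw [hY]; positivity
  have hS : (0:ℝ) < 1 + X + Y := by linarith
  have hSne : (1 + X + Y) ≠ 0 := ne_of_gt hS
  have e0 : (Γp21 + Γp31) * 1 + (-Γm21) * X + (-Γm31) * Y = 0 := by
    have := hXD; have := hYD
    have h : ((Γp21 + Γp31) * 1 + (-Γm21) * X + (-Γm31) * Y) * D = 0 := by
      have : (Γp21 + Γp31) * D - Γm21 * (X * D) - Γm31 * (Y * D) = 0 := by
        rw [hXD, hYD, hD]; ring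
      linarith [this]
    exact (mul_eq_zero.mp h).resolve_right hDne
  have e1 : (-Γp21) * 1 + (Γm21 + Γp32) * X + (-Γm32) * Y = 0 := by
    have h : ((-Γp21) * 1 + (Γm21 + Γp32) * X + (-Γm32) * Y) * D = 0 := by
      have : (-Γp21) * D + (Γm21 + Γp32) * (X * D) - Γm32 * (Y * D) = 0 := by
        rw [hXD, hYD, hD]; ring
      linarith [this]
    exact (mul_eq_zero.mp h).resolve_right hDne
  have e2 : (-Γp31) * 1 + (-Γp32) * X + (Γm31 + Γm32) * Y = 0 := by
    have h : ((-Γp31) * 1 + (-Γp32) * X + (Γm31 + Γm32) * Y) * D = 0 := by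
      have : (-Γp31) * D - Γp32 * (X * D) + (Γm31 + Γm32) * (Y * D) = 0 := by
        rw [hXD, hYD, hD]; ring
      linarith [this]
    exact (mul_eq_zero.mp h).resolve_right hDne
  refine ⟨?_, ?_, ?_⟩
  · intro i
    fin_cases i <;> simp [hρ] <;> positivity
  · rw [hρ, Fin.sum_univ_three]
    simp only [Matrix.cons_val_zero, Matrix.cons_val_one, Matrix.head_cons,
      Matrix.cons_val_two, Matrix.tail_cons]
    field_simp
  · subst hA hρ
    funext i
    fin_cases i <;>
      simp [Matrix.mulVec, dotProduct, Fin.sum_univ_three]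
    · linear_combination e0 / (1 + X + Y)
    · linear_combination e1 / (1 + X + Y)
    · linear_combination e2 / (1 + X + Y)
end

section
/- Let ρ = (ρ_{11},ρ_{22},ρ_{33}) be the stationary state of the three-level Pauli master equation with local-equilibrium rates, and define the stationary micro-currents J_{21} := Γ_{-,21}ρ_{22} − Γ_{+,21}ρ_{11}, J_{32} := Γ_{-,32}ρ_{33} − Γ_{+,32}ρ_{22}, J_{31} := Γ_{-,31}ρ_{33} − Γ_{+,31}ρ_{11}. Then J_{21} = J_{32} = −J_{31}, the common sign of J_{21} and J_{32} equals the sign of δ := b_{21} − b_{31} + b_{32} (they are positive, zero or negative according as δ > 0, δ = 0 or δ < 0), and the energy currents J^E_{ml} := (ε_m − ε_l)J_{ml} satisfy the balance J^E_{31} = −(J^E_{21} + J^E_{32}). -/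
/-- For the stationary state of the three-level Pauli master equation with
local-equilibrium rates `Γ₋ = γ(N+1)`, `Γ₊ = γN`, `N = 1/(e^b − 1)`, the stationary
micro-currents satisfy `J₂₁ = J₃₂ = −J₃₁`, their common sign equals the sign of
`δ = b₂₁ − b₃₁ + b₃₂`, and the energy currents balance:
`J^E₃₁ = −(J^E₂₁ + J^E₃₂)`. -/
theorem three_level_microcurrents
    (ε1 ε2 ε3 : ℝ) (h12 : ε1 < ε2) (h23 : ε2 < ε3)
    (b21 b31 b32 : ℝ) (hb21 : 0 < b21) (hb31 : 0 < b31) (hb32 : 0 < b32)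
    (γ21 γ31 γ32 : ℝ) (hγ21 : 0 < γ21) (hγ31 : 0 < γ31) (hγ32 : 0 < γ32)
    (Γm21 Γm31 Γm32 Γp21 Γp31 Γp32 : ℝ)
    (hΓm21 : Γm21 = γ21 * (1 / (Real.exp b21 - 1) + 1))
    (hΓp21 : Γp21 = γ21 * (1 / (Real.exp b21 - 1)))
    (hΓm31 : Γm31 = γ31 * (1 / (Real.exp b31 - 1) + 1))
    (hΓp31 : Γp31 = γ31 * (1 / (Real.exp b31 - 1)))
    (hΓm32 : Γm32 = γ32 * (1 / (Real.exp b32 - 1) + 1))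
    (hΓp32 : Γp32 = γ32 * (1 / (Real.exp b32 - 1)))
    (ρ : Fin 3 → ℝ) (hpos : ∀ i, 0 < ρ i) (hsum : ρ 0 + ρ 1 + ρ 2 = 1)
    (hst1 : (Γp21 + Γp31) * ρ 0 - Γm21 * ρ 1 - Γm31 * ρ 2 = 0)
    (hst2 : -Γp21 * ρ 0 + (Γm21 + Γp32) * ρ 1 - Γm32 * ρ 2 = 0)
    (hst3 : -Γp31 * ρ 0 - Γp32 * ρ 1 + (Γm31 + Γm32) * ρ 2 = 0)
    (J21 J31 J32 δ : ℝ)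
    (hJ21 : J21 = Γm21 * ρ 1 - Γp21 * ρ 0)
    (hJ32 : J32 = Γm32 * ρ 2 - Γp32 * ρ 1)
    (hJ31 : J31 = Γm31 * ρ 2 - Γp31 * ρ 0)
    (hδ : δ = b21 - b31 + b32) :
    J21 = J32 ∧ J32 = -J31 ∧
    (0 < J21 ↔ 0 < δ) ∧ (J21 = 0 ↔ δ = 0) ∧ (J21 < 0 ↔ δ < 0) ∧
    (ε3 - ε1) * J31 = -((ε2 - ε1) * J21 + (ε3 - ε2) * J32) := by
  obtain ⟨hρ0, hρ1, hρ2⟩ : 0 < ρ 0 ∧ 0 < ρ 1 ∧ 0 < ρ 2 := ⟨hpos 0, hpos 1, hpos 2⟩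
  have he21 : (1:ℝ) < Real.exp b21 := Real.one_lt_exp_iff.mpr hb21
  have he31 : (1:ℝ) < Real.exp b31 := Real.one_lt_exp_iff.mpr hb31
  have he32 : (1:ℝ) < Real.exp b32 := Real.one_lt_exp_iff.mpr hb32
  have hd21 : Real.exp b21 - 1 > 0 := by linarith
  have hd31 : Real.exp b31 - 1 > 0 := by linarith
  have hd32 : Real.exp b32 - 1 > 0 := by linarith
  have hp21 : 0 < Γp21 := by rw [hΓp21]; positivity
  have hp31 : 0 < Γp31 := by rw [hΓp31]; positivity
  have hp32 : 0 < Γp32 := by rw [hΓp32]; positivity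
  have hm21 : Γm21 = Real.exp b21 * Γp21 := by
    rw [hΓm21, hΓp21]; field_simp; ring
  have hm31 : Γm31 = Real.exp b31 * Γp31 := by
    rw [hΓm31, hΓp31]; field_simp; ring
  have hm32 : Γm32 = Real.exp b32 * Γp32 := by
    rw [hΓm32, hΓp32]; field_simp; ring
  have hJeq : J21 = J32 := by rw [hJ21, hJ32]; linarith
  have hJneg : J32 = -J31 := by rw [hJ32, hJ31]; linarith
  have hJ21' : J21 = Γp21 * (Real.exp b21 * ρ 1 - ρ 0) := by rw [hJ21, hm21]; ring
  have hJ32' : J21 = Γp32 * (Real.exp b32 * ρ 2 - ρ 1) := by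
    rw [hJeq, hJ32, hm32]; ring
  have hJ31' : -J21 = Γp31 * (Real.exp b31 * ρ 2 - ρ 0) := by
    rw [hJeq, hJneg, hJ31, hm31]; ring
  have key_pos : 0 < J21 → 0 < δ := by
    intro h
    have ha := h; rw [hJ21'] at ha
    have hb := h; rw [hJ32'] at hb
    have hc : -J21 < 0 := by linarith
    rw [hJ31'] at hc
    have h1 : 0 < Real.exp b21 * ρ 1 - ρ 0 := pos_of_mul_pos_right ha hp21.le
    have h2 : 0 < Real.exp b32 * ρ 2 - ρ 1 := pos_of_mul_pos_right hb hp32.le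
    have h3 : Real.exp b31 * ρ 2 - ρ 0 < 0 := neg_of_mul_neg_right hc hp31.le
    have hstep := mul_lt_mul_of_pos_left (show ρ 1 < Real.exp b32 * ρ 2 by linarith)
      (Real.exp_pos b21)
    rw [← mul_assoc] at hstep
    have hlt : Real.exp b31 * ρ 2 < Real.exp b21 * Real.exp b32 * ρ 2 := by linarith
    have : Real.exp b31 < Real.exp (b21 + b32) := by
      rw [Real.exp_add]
      exact lt_of_mul_lt_mul_right hlt hρ2.le
    have := Real.exp_lt_exp.mp this
    linarith
  have key_neg : J21 < 0 → δ < 0 := by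
    intro h
    have ha := h; rw [hJ21'] at ha
    have hb := h; rw [hJ32'] at hb
    have hc : 0 < -J21 := by linarith
    rw [hJ31'] at hc
    have h1 : Real.exp b21 * ρ 1 - ρ 0 < 0 := neg_of_mul_neg_right ha hp21.le
    have h2 : Real.exp b32 * ρ 2 - ρ 1 < 0 := neg_of_mul_neg_right hb hp32.le
    have h3 : 0 < Real.exp b31 * ρ 2 - ρ 0 := pos_of_mul_pos_right hc hp31.le
    have hstep := mul_lt_mul_of_pos_left (show Real.exp b32 * ρ 2 < ρ 1 by linarith)
      (Real.exp_pos b21)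
    rw [← mul_assoc] at hstep
    have hlt : Real.exp b21 * Real.exp b32 * ρ 2 < Real.exp b31 * ρ 2 := by linarith
    have : Real.exp (b21 + b32) < Real.exp b31 := by
      rw [Real.exp_add]
      exact lt_of_mul_lt_mul_right hlt hρ2.le
    have := Real.exp_lt_exp.mp this
    linarith
  have key_zero : J21 = 0 → δ = 0 := by
    intro h
    have h1 : Real.exp b21 * ρ 1 - ρ 0 = 0 := by
      have ha := h; rw [hJ21'] at ha
      rcases mul_eq_zero.mp ha with h' | h'
      · exact absurd h' hp21.ne'
      · exact h'
    have h2 : Real.exp b32 * ρ 2 - ρ 1 = 0 := by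
      have hb := h; rw [hJ32'] at hb
      rcases mul_eq_zero.mp hb with h' | h'
      · exact absurd h' hp32.ne'
      · exact h'
    have h3 : Real.exp b31 * ρ 2 - ρ 0 = 0 := by
      have : Γp31 * (Real.exp b31 * ρ 2 - ρ 0) = 0 := by rw [← hJ31', h, neg_zero]
      rcases mul_eq_zero.mp this with h' | h'
      · exact absurd h' hp31.ne'
      · exact h'
    have heq : Real.exp b31 * ρ 2 = Real.exp (b21 + b32) * ρ 2 := by
      rw [Real.exp_add]
      linear_combination h3 - h1 - Real.exp b21 * h2
    have : Real.exp b31 = Real.exp (b21 + b32) :=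
      mul_right_cancel₀ hρ2.ne' heq
    have := Real.exp_injective this
    linarith
  have h1 : (0 < J21 ↔ 0 < δ) := by
    constructor
    · exact key_pos
    · intro h
      rcases lt_trichotomy J21 0 with h' | h' | h'
      · linarith [key_neg h']
      · linarith [key_zero h']
      · exact h'
  have h2 : (J21 = 0 ↔ δ = 0) := by
    constructor
    · exact key_zero
    · intro h
      rcases lt_trichotomy J21 0 with h' | h' | h'
      · linarith [key_neg h']
      · exact h'
      · linarith [key_pos h']
  have h3 : (J21 < 0 ↔ δ < 0) := by
    constructor
    · exact key_neg
    · intro h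
      rcases lt_trichotomy J21 0 with h' | h' | h'
      · exact h'
      · linarith [key_zero h']
      · linarith [key_pos h']
  refine ⟨hJeq, hJneg, h1, h2, h3, ?_⟩
  have : J31 = -J21 := by linarith [hJeq, hJneg]
  rw [this, ← hJeq]
  ring
end

section
/- The stationary state of the three-level Pauli master equation with local-equilibrium rates satisfies the detailed balance condition ρ_{mm}/ρ_{ll} = Γ(l→m)/Γ(m→l) for all pairs m ≠ l if and only if δ := b_{21} − b_{31} + b_{32} = 0; equivalently, the cycle condition (Γ_{-,31}/Γ_{+,31}) = (Γ_{-,32}/Γ_{+,32})(Γ_{-,21}/Γ_{+,21}) holds if and only if β(ε_2−ε_1)(ε_2−ε_1) − β(ε_3−ε_1)(ε_3−ε_1) + β(ε_3−ε_2)(ε_3−ε_2) = 0, and in that case all three stationary micro-currents vanish. -/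
set_option maxHeartbeats 1000000

private lemma cubic_current_zero (a b c J : ℝ) (ha : 0 < a) (hb : 0 < b) (hc : 0 < c)
    (ha' : 0 < a + J) (hb' : 0 < b + J) (hc' : 0 < c + J)
    (hprod : (a + J) * (b + J) * (c + J) = a * b * c) : J = 0 := by
  rcases lt_trichotomy J 0 with h | h | h
  · have hab : (a + J) * (b + J) < a * b := by nlinarith
    have h1 : (a + J) * (b + J) * (c + J) < a * b * (c + J) :=
      mul_lt_mul_of_pos_right hab hc'
    have h2 : a * b * (c + J) < a * b * c := by nlinarith [mul_pos ha hb]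
    linarith
  · exact h
  · have hab : a * b < (a + J) * (b + J) := by nlinarith
    have h1 : a * b * (c + J) < (a + J) * (b + J) * (c + J) :=
      mul_lt_mul_of_pos_right hab hc'
    have h2 : a * b * c < a * b * (c + J) := by nlinarith [mul_pos ha hb]
    linarith


/-- The stationary state of the three-level Pauli master equation with local-equilibrium
rates satisfies the detailed balance condition `ρ_mm/ρ_ll = Γ(l→m)/Γ(m→l)` if and only if
`δ = b₂₁ − b₃₁ + b₃₂ = 0`; equivalently, the cycle condition
`Γ₋₃₁/Γ₊₃₁ = (Γ₋₃₂/Γ₊₃₂)(Γ₋₂₁/Γ₊₂₁)` holds iff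
`β(ε₂−ε₁)(ε₂−ε₁) − β(ε₃−ε₁)(ε₃−ε₁) + β(ε₃−ε₂)(ε₃−ε₂) = 0`, and in that case all three
stationary micro-currents vanish. -/
theorem three_level_detailed_balance_iff
    (ε1 ε2 ε3 : ℝ) (h12 : ε1 < ε2) (h23 : ε2 < ε3)
    (β : ℝ → ℝ) (b21 b31 b32 : ℝ)
    (hb21 : b21 = β (ε2 - ε1) * (ε2 - ε1))
    (hb31 : b31 = β (ε3 - ε1) * (ε3 - ε1))
    (hb32 : b32 = β (ε3 - ε2) * (ε3 - ε2))
    (hb21pos : 0 < b21) (hb31pos : 0 < b31) (hb32pos : 0 < b32)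
    (γ21 γ31 γ32 : ℝ) (hγ21 : 0 < γ21) (hγ31 : 0 < γ31) (hγ32 : 0 < γ32)
    (Γm21 Γm31 Γm32 Γp21 Γp31 Γp32 : ℝ)
    (hΓm21 : Γm21 = γ21 * (1 / (Real.exp b21 - 1) + 1))
    (hΓp21 : Γp21 = γ21 * (1 / (Real.exp b21 - 1)))
    (hΓm31 : Γm31 = γ31 * (1 / (Real.exp b31 - 1) + 1))
    (hΓp31 : Γp31 = γ31 * (1 / (Real.exp b31 - 1)))
    (hΓm32 : Γm32 = γ32 * (1 / (Real.exp b32 - 1) + 1))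
    (hΓp32 : Γp32 = γ32 * (1 / (Real.exp b32 - 1)))
    (ρ : Fin 3 → ℝ) (hpos : ∀ i, 0 < ρ i) (hsum : ρ 0 + ρ 1 + ρ 2 = 1)
    (hst1 : (Γp21 + Γp31) * ρ 0 - Γm21 * ρ 1 - Γm31 * ρ 2 = 0)
    (hst2 : -Γp21 * ρ 0 + (Γm21 + Γp32) * ρ 1 - Γm32 * ρ 2 = 0)
    (hst3 : -Γp31 * ρ 0 - Γp32 * ρ 1 + (Γm31 + Γm32) * ρ 2 = 0)
    (J21 J31 J32 : ℝ)
    (hJ21 : J21 = Γm21 * ρ 1 - Γp21 * ρ 0)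
    (hJ32 : J32 = Γm32 * ρ 2 - Γp32 * ρ 1)
    (hJ31 : J31 = Γm31 * ρ 2 - Γp31 * ρ 0) :
    ((ρ 1 / ρ 0 = Γp21 / Γm21 ∧ ρ 2 / ρ 0 = Γp31 / Γm31 ∧ ρ 2 / ρ 1 = Γp32 / Γm32) ↔
      b21 - b31 + b32 = 0) ∧
    (Γm31 / Γp31 = (Γm32 / Γp32) * (Γm21 / Γp21) ↔
      β (ε2 - ε1) * (ε2 - ε1) - β (ε3 - ε1) * (ε3 - ε1) + β (ε3 - ε2) * (ε3 - ε2) = 0) ∧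
    (b21 - b31 + b32 = 0 → J21 = 0 ∧ J32 = 0 ∧ J31 = 0) := by
  have hρ0 := hpos 0
  have hρ1 := hpos 1
  have hρ2 := hpos 2
  -- exp b - 1 > 0
  have hE21 : (0:ℝ) < Real.exp b21 - 1 := by
    nlinarith [Real.add_one_lt_exp (ne_of_gt hb21pos)]
  have hE31 : (0:ℝ) < Real.exp b31 - 1 := by
    nlinarith [Real.add_one_lt_exp (ne_of_gt hb31pos)]
  have hE32 : (0:ℝ) < Real.exp b32 - 1 := by
    nlinarith [Real.add_one_lt_exp (ne_of_gt hb32pos)]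
  have hΓp21pos : 0 < Γp21 := by rw [hΓp21]; positivity
  have hΓp31pos : 0 < Γp31 := by rw [hΓp31]; positivity
  have hΓp32pos : 0 < Γp32 := by rw [hΓp32]; positivity
  have hR21 : Γm21 = Real.exp b21 * Γp21 := by
    rw [hΓm21, hΓp21]; field_simp; ring
  have hR31 : Γm31 = Real.exp b31 * Γp31 := by
    rw [hΓm31, hΓp31]; field_simp; ring
  have hR32 : Γm32 = Real.exp b32 * Γp32 := by
    rw [hΓm32, hΓp32]; field_simp; ring
  have hΓm21pos : 0 < Γm21 := by rw [hR21]; positivity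
  have hΓm31pos : 0 < Γm31 := by rw [hR31]; positivity
  have hΓm32pos : 0 < Γm32 := by rw [hR32]; positivity
  -- current relations
  have hJa : J21 = -J31 := by rw [hJ21, hJ31]; linarith
  have hJb : J21 = J32 := by rw [hJ21, hJ32]; linarith
  -- under the cycle condition, the current vanishes
  have key : b21 - b31 + b32 = 0 → J21 = 0 := by
    intro hδ
    have hcyc : Γm21 * Γm32 * Γp31 = Γp21 * Γp32 * Γm31 := by
      rw [hR21, hR31, hR32]
      have h : Real.exp b21 * Real.exp b32 = Real.exp b31 := by
        rw [← Real.exp_add]; congr 1; linarith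
      linear_combination Γp21 * Γp32 * Γp31 * h
    have h1 : Γp21 * ρ 0 + J21 = Γm21 * ρ 1 := by rw [hJ21]; ring
    have h2 : Γp32 * ρ 1 + J21 = Γm32 * ρ 2 := by rw [hJb, hJ32]; ring
    have h3 : Γm31 * ρ 2 + J21 = Γp31 * ρ 0 := by
      have : J21 = -(Γm31 * ρ 2 - Γp31 * ρ 0) := by rw [hJa, hJ31]
      rw [this]; ring
    have hprod : (Γp21 * ρ 0 + J21) * (Γp32 * ρ 1 + J21) * (Γm31 * ρ 2 + J21)
        = (Γp21 * ρ 0) * (Γp32 * ρ 1) * (Γm31 * ρ 2) := by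
      rw [h1, h2, h3]; linear_combination ρ 0 * ρ 1 * ρ 2 * hcyc
    have ha : 0 < Γp21 * ρ 0 := mul_pos hΓp21pos hρ0
    have hb : 0 < Γp32 * ρ 1 := mul_pos hΓp32pos hρ1
    have hc : 0 < Γm31 * ρ 2 := mul_pos hΓm31pos hρ2
    have ha' : 0 < Γp21 * ρ 0 + J21 := by rw [h1]; exact mul_pos hΓm21pos hρ1
    have hb' : 0 < Γp32 * ρ 1 + J21 := by rw [h2]; exact mul_pos hΓm32pos hρ2
    have hc' : 0 < Γm31 * ρ 2 + J21 := by rw [h3]; exact mul_pos hΓp31pos hρ0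
    exact cubic_current_zero _ _ _ _ ha hb hc ha' hb' hc' hprod
  refine ⟨?_, ?_, ?_⟩
  · constructor
    · rintro ⟨d1, d2, d3⟩
      have e1 : ρ 1 / ρ 0 = Real.exp (-b21) := by
        rw [d1, hR21, Real.exp_neg]
        field_simp
      have e2 : ρ 2 / ρ 0 = Real.exp (-b31) := by
        rw [d2, hR31, Real.exp_neg]
        field_simp
      have e3 : ρ 2 / ρ 1 = Real.exp (-b32) := by
        rw [d3, hR32, Real.exp_neg]
        field_simp
      have : Real.exp (-b31) = Real.exp (-b32) * Real.exp (-b21) := by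
        rw [← e1, ← e2, ← e3]
        field_simp
      rw [← Real.exp_add] at this
      have := Real.exp_injective this
      linarith
    · intro hδ
      have hJ0 := key hδ
      have h1 : Γm21 * ρ 1 = Γp21 * ρ 0 := by
        have := hJ21; rw [hJ0] at this; linarith
      have h2 : Γm32 * ρ 2 = Γp32 * ρ 1 := by
        have := hJ32; rw [← hJb, hJ0] at this; linarith
      have h3 : Γm31 * ρ 2 = Γp31 * ρ 0 := by
        have := hJ31; rw [← neg_eq_iff_eq_neg.mpr hJa, hJ0] at this; linarith
      refine ⟨?_, ?_, ?_⟩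
      · rw [div_eq_div_iff hρ0.ne' hΓm21pos.ne']; linarith
      · rw [div_eq_div_iff hρ0.ne' hΓm31pos.ne']; linarith
      · rw [div_eq_div_iff hρ1.ne' hΓm32pos.ne']; linarith
  · have lhs : Γm31 / Γp31 = Real.exp b31 := by rw [hR31]; field_simp
    have l2 : Γm32 / Γp32 = Real.exp b32 := by rw [hR32]; field_simp
    have l3 : Γm21 / Γp21 = Real.exp b21 := by rw [hR21]; field_simp
    rw [lhs, l2, l3, ← Real.exp_add, Real.exp_eq_exp, ← hb21, ← hb31, ← hb32]
    constructor <;> intro h <;> linarith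
  · intro hδ
    have hJ0 := key hδ
    refine ⟨hJ0, ?_, ?_⟩
    · rw [← hJb]; exact hJ0
    · have := hJa; rw [hJ0] at this; linarith
end
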